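/- Let A₁, A₂, A₃ ∈ B(H) with A₁, A₂ positive and the block operator [[A₁, A₃*],[A₃, A₂]] positive on H ⊕ H. Then for any unit vector u and r ≥ 1, |⟨A₃u,u⟩|^(2r) ≤ (1/2)(⟨A₁^(2r)u,u⟩ · ⟨A₂^(2r)u,u⟩)^(1/2) + (1/2)|⟨A₁u, A₂u⟩|^r. -/

import Mathlib

open scoped InnerProductSpace ComplexOrder NNReal
open ContinuousLinearMap

section Aux
variable {H : Type*} [NormedAddCommGroup H] [InnerProductSpace ℂ H] [CompleteSpace H]

lemma aux_inner_nonneg {T : H →L[ℂ] H} (hT : 0 ≤ T) (u : H) : 0 ≤ (⟪T u, u⟫_ℂ).re :=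
  (Complex.le_def.mp (((nonneg_iff_isPositive T).mp hT).inner_nonneg_left u)).1

lemma aux_inner_mono {T S : H →L[ℂ] H} (h : T ≤ S) (u : H) :
    (⟪T u, u⟫_ℂ).re ≤ (⟪S u, u⟫_ℂ).re := by
  have h2 := (ContinuousLinearMap.le_def T S |>.mp h).inner_nonneg_left u
  simp only [sub_apply, inner_sub_left, map_sub, sub_nonneg, RCLike.re_to_complex] at h2
  exact (Complex.le_def.mp h2).1

lemma aux_inner_real {T : H →L[ℂ] H} (hT : 0 ≤ T) (u : H) :
    ⟪T u, u⟫_ℂ = ((⟪T u, u⟫_ℂ).re : ℂ) := by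
  have := ((isPositive_iff_complex T).mp ((nonneg_iff_isPositive T).mp hT) u).1
  simpa [RCLike.re_to_complex] using this.symm

omit [CompleteSpace H] in
lemma buzano {e x y : H} (he : ‖e‖ = 1) :
    ‖⟪e, x⟫_ℂ‖ * ‖⟪e, y⟫_ℂ‖ ≤ (‖x‖ * ‖y‖ + ‖⟪x, y⟫_ℂ‖) / 2 := by
  set z : H := (2 * ⟪e, x⟫_ℂ) • e - x with hz
  have hip : ⟪(2 * ⟪e, x⟫_ℂ) • e, x⟫_ℂ = ((2 * ‖⟪e, x⟫_ℂ‖ ^ 2 : ℝ) : ℂ) := by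
    rw [inner_smul_left, map_mul, mul_assoc, RCLike.conj_mul]
    simp [Complex.conj_ofNat]
  have h2 : ‖z‖ ^ 2 = ‖x‖ ^ 2 := by
    rw [hz, @norm_sub_sq ℂ, hip]
    simp [norm_smul, he, RCLike.re_to_complex, ← Complex.ofReal_pow]
    ring
  have hnz : ‖z‖ = ‖x‖ := by
    rw [← Real.sqrt_sq (norm_nonneg z), h2, Real.sqrt_sq (norm_nonneg x)]
  have hzy : ⟪z, y⟫_ℂ = 2 * ⟪x, e⟫_ℂ * ⟪e, y⟫_ℂ - ⟪x, y⟫_ℂ := by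
    rw [hz, inner_sub_left, inner_smul_left, map_mul, inner_conj_symm]
    simp [Complex.conj_ofNat]
  have h1 : ‖2 * ⟪x, e⟫_ℂ * ⟪e, y⟫_ℂ‖ ≤ ‖⟪z, y⟫_ℂ‖ + ‖⟪x, y⟫_ℂ‖ := by
    calc ‖2 * ⟪x, e⟫_ℂ * ⟪e, y⟫_ℂ‖
        = ‖(2 * ⟪x, e⟫_ℂ * ⟪e, y⟫_ℂ - ⟪x, y⟫_ℂ) + ⟪x, y⟫_ℂ‖ := by ring_nf
      _ ≤ ‖2 * ⟪x, e⟫_ℂ * ⟪e, y⟫_ℂ - ⟪x, y⟫_ℂ‖ + ‖⟪x, y⟫_ℂ‖ := norm_add_le _ _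
      _ = ‖⟪z, y⟫_ℂ‖ + ‖⟪x, y⟫_ℂ‖ := by rw [hzy]
  have h2' : ‖⟪z, y⟫_ℂ‖ ≤ ‖x‖ * ‖y‖ := by
    calc ‖⟪z, y⟫_ℂ‖ ≤ ‖z‖ * ‖y‖ := norm_inner_le_norm z y
      _ = ‖x‖ * ‖y‖ := by rw [hnz]
  have h3 : ‖2 * ⟪x, e⟫_ℂ * ⟪e, y⟫_ℂ‖ = 2 * (‖⟪e, x⟫_ℂ‖ * ‖⟪e, y⟫_ℂ‖) := by
    rw [norm_mul, norm_mul, ← inner_conj_symm x e, RCLike.norm_conj]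
    simp [mul_assoc]
  linarith

end Aux

section CS
variable {H : Type*} [NormedAddCommGroup H] [InnerProductSpace ℂ H] [CompleteSpace H]

lemma cs_step (A₁ A₂ A₃ : H →L[ℂ] H)
    (hblock : ∀ u v : H, 0 ≤ ⟪A₁ u + adjoint A₃ v, u⟫_ℂ + ⟪A₃ u + A₂ v, v⟫_ℂ) (u : H) :
    ‖⟪A₃ u, u⟫_ℂ‖ ^ 2 ≤ (⟪A₁ u, u⟫_ℂ).re * (⟪A₂ u, u⟫_ℂ).re := by
  set a := (⟪A₁ u, u⟫_ℂ).re with hadef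
  set b := (⟪A₂ u, u⟫_ℂ).re with hbdef
  set c := ⟪A₃ u, u⟫_ℂ with hc
  have ha : 0 ≤ a := by
    have h := hblock u 0
    simp only [map_zero, add_zero, inner_zero_right] at h
    simpa [hadef] using (Complex.le_def.mp h).1
  have hb : 0 ≤ b := by
    have h := hblock 0 u
    simp only [map_zero, zero_add, add_zero, inner_zero_right, zero_add] at h
    simpa [hbdef] using (Complex.le_def.mp h).1
  by_cases hc0 : c = 0
  · simp [hc0]
    exact mul_nonneg ha hb
  have hcn : (0:ℝ) < ‖c‖ := norm_pos_iff.mpr hc0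
  have quad : ∀ t : ℝ, 0 ≤ b * (t * t) + (-(2 * ‖c‖)) * t + a := by
    intro t
    set μ : ℂ := (-(t:ℂ)) * (starRingEnd ℂ) c / (‖c‖ : ℂ) with hμ
    have hne : ((‖c‖ : ℝ) : ℂ) ≠ 0 := by exact_mod_cast hcn.ne'
    have hμc : μ * c = ((-(t * ‖c‖) : ℝ) : ℂ) := by
      have hne2 : ((‖c‖ : ℝ) : ℂ) ≠ 0 := hne
      rw [hμ, div_mul_eq_mul_div, mul_assoc, RCLike.conj_mul, sq]
      push_cast
      field_simp [hne2]
      rfl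
    have hμμ : (starRingEnd ℂ) μ * μ = ((t * t : ℝ) : ℂ) := by
      rw [hμ]
      simp only [map_div₀, map_mul, map_neg, Complex.conj_conj, Complex.conj_ofReal]
      rw [div_mul_div_comm]
      have hne2 : ((‖c‖ : ℝ) : ℂ) ≠ 0 := hne
      rw [show -(t:ℂ) * c * (-(t:ℂ) * (starRingEnd ℂ) c) = ((t:ℂ) * (t:ℂ)) * (c * (starRingEnd ℂ) c) by ring, RCLike.mul_conj, sq]
      push_cast
      field_simp [hne2]
      rfl
    have hE := hblock u (μ • u)
    have hEeq : ⟪A₁ u + adjoint A₃ (μ • u), u⟫_ℂ + ⟪A₃ u + A₂ (μ • u), μ • u⟫_ℂ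
        = ⟪A₁ u, u⟫_ℂ + ((starRingEnd ℂ) (μ * c) + μ * c)
          + ((t * t : ℝ) : ℂ) * ⟪A₂ u, u⟫_ℂ := by
      rw [← hμμ]
      simp only [map_smul, inner_add_left, inner_smul_left, inner_smul_right,
        adjoint_inner_left, map_mul]
      rw [← inner_conj_symm u (A₃ u), hc]
      ring
    rw [hEeq] at hE
    have hre := (Complex.le_def.mp hE).1
    simp only [Complex.add_re, Complex.mul_re, Complex.add_im, hμc, Complex.conj_ofReal,
      Complex.ofReal_re, Complex.ofReal_im, Complex.zero_re] at hre
    rw [← hadef, ← hbdef] at hre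
    nlinarith [hre]
  have hd := discrim_le_zero quad
  rw [discrim] at hd
  nlinarith [hd]

end CS

section McCarthy
variable {H : Type*} [NormedAddCommGroup H] [InnerProductSpace ℂ H] [CompleteSpace H]

lemma mccarthy (A : H →L[ℂ] H) (hA : 0 ≤ A) {r : ℝ} (hr : 1 ≤ r) (u : H) (hu : ‖u‖ = 1) :
    (‖A u‖ ^ 2) ^ r ≤ (⟪(A ^ (2 * r)) u, u⟫_ℂ).re := by
  have hA2r : (0 : H →L[ℂ] H) ≤ A ^ (2 * r) := CFC.rpow_nonneg
  set c : ℝ := ‖A u‖ ^ 2 with hc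
  rcases eq_or_lt_of_le (by positivity : (0:ℝ) ≤ c) with h0 | hcpos
  · rw [← h0, Real.zero_rpow (by linarith : r ≠ 0)]
    exact aux_inner_nonneg hA2r u
  · have hsa : IsSelfAdjoint A := .of_nonneg hA
    set α : ℝ := c ^ r * (1 - r) with hα
    set β : ℝ := r * c ^ (r - 1) with hβ
    have scalar : ∀ t ∈ spectrum ℝ A, α + β * (t * t) ≤ ((t.toNNReal ^ (2*r) : ℝ≥0) : ℝ) := by
      intro t ht
      have ht0 : 0 ≤ t := spectrum_nonneg_of_nonneg hA ht
      have hcoe : ((t.toNNReal ^ (2*r) : ℝ≥0) : ℝ) = t ^ (2*r) := by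
        rw [NNReal.coe_rpow, Real.coe_toNNReal t ht0]
      rw [hcoe]
      have hber := one_add_mul_self_le_rpow_one_add
        (s := t*t/c - 1) (by
          have : 0 ≤ t*t/c := by positivity
          linarith) hr
      rw [show (1 : ℝ) + (t*t/c - 1) = t*t/c by ring] at hber
      have hmul := mul_le_mul_of_nonneg_left hber (le_of_lt (Real.rpow_pos_of_pos hcpos r))
      have hrhs : c ^ r * (t*t/c) ^ r = t ^ (2*r) := by
        rw [← Real.mul_rpow (le_of_lt hcpos) (by positivity),
          mul_div_cancel₀ _ (ne_of_gt hcpos)]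
        rw [show t * t = t ^ (2:ℝ) by
          rw [show ((2:ℝ)) = ((2:ℕ):ℝ) by norm_num, Real.rpow_natCast]; ring]
        rw [← Real.rpow_mul ht0]
      have hlhs : c ^ r * (1 + r * (t*t/c - 1)) = α + β * (t*t) := by
        rw [hα, hβ, Real.rpow_sub hcpos, Real.rpow_one]
        field_simp
        ring
      rw [hlhs, hrhs] at hmul
      exact hmul
    have hgcont : Continuous (fun t : ℝ => ((t.toNNReal ^ (2*r) : ℝ≥0) : ℝ)) :=
      NNReal.continuous_coe.comp
        ((NNReal.continuous_rpow_const (by linarith)).comp continuous_real_toNNReal)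
    have e2 : A ^ (2*r) = cfc (fun t : ℝ => ((t.toNNReal ^ (2*r) : ℝ≥0) : ℝ)) A := by
      rw [CFC.rpow_def, cfc_nnreal_eq_real _ A hA]
    have e1 : cfc (fun t : ℝ => α + β * (t * t)) A
        = algebraMap ℝ (H →L[ℂ] H) α + β • (A * A) := by
      rw [cfc_add (a := A) (fun _ : ℝ => α) (fun t : ℝ => β * (t * t)),
        cfc_const α A, cfc_const_mul β (fun t : ℝ => t * t) A,
        cfc_mul (a := A) (fun t : ℝ => t) (fun t : ℝ => t),
        cfc_id' ℝ A]
    have hcfc : algebraMap ℝ (H →L[ℂ] H) α + β • (A * A) ≤ A ^ (2*r) := by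
      rw [e2, ← e1]
      exact cfc_mono scalar (by fun_prop) hgcont.continuousOn
    have hfin := aux_inner_mono hcfc u
    have happ : (algebraMap ℝ (H →L[ℂ] H) α + β • (A * A)) u = α • u + β • (A (A u)) := by
      simp [Algebra.algebraMap_eq_smul_one, ContinuousLinearMap.mul_apply]
    have hsym := (isSelfAdjoint_iff_isSymmetric.mp hsa)
    have hre : (⟪(algebraMap ℝ (H →L[ℂ] H) α + β • (A * A)) u, u⟫_ℂ).re = α + β * c := by
      have h1 : ⟪A (A u), u⟫_ℂ = ⟪A u, A u⟫_ℂ := hsym (A u) u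
      rw [happ, inner_add_left, RCLike.real_smul_eq_coe_smul (K := ℂ) α,
        RCLike.real_smul_eq_coe_smul (K := ℂ) β, inner_smul_left, inner_smul_left,
        RCLike.conj_ofReal, RCLike.conj_ofReal, h1, inner_self_eq_norm_sq_to_K,
        inner_self_eq_norm_sq_to_K]
      rw [hu, hc]
      push_cast
      norm_num
      left
      norm_cast
    rw [hre] at hfin
    have : α + β * c = c ^ r := by
      rw [hα, hβ, Real.rpow_sub hcpos, Real.rpow_one]
      field_simp
      ring
    linarith
end McCarthy

set_option maxHeartbeats 1000000 in
theorem stmt_15 {H : Type*} [NormedAddCommGroup H] [InnerProductSpace ℂ H]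
    [CompleteSpace H] (A₁ A₂ A₃ : H →L[ℂ] H)
    (hA₁ : 0 ≤ A₁) (hA₂ : 0 ≤ A₂)
    (hblock : ∀ u v : H,
      0 ≤ ⟪A₁ u + adjoint A₃ v, u⟫_ℂ + ⟪A₃ u + A₂ v, v⟫_ℂ)
    (r : ℝ) (hr : 1 ≤ r) (u : H) (hu : ‖u‖ = 1) :
    ‖⟪A₃ u, u⟫_ℂ‖ ^ (2 * r) ≤
      (1 / 2) * ((⟪(A₁ ^ (2 * r)) u, u⟫_ℂ).re * (⟪(A₂ ^ (2 * r)) u, u⟫_ℂ).re)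
          ^ ((1 : ℝ) / 2) +
        (1 / 2) * ‖⟪A₁ u, A₂ u⟫_ℂ‖ ^ r := by
  have hr0 : (0:ℝ) ≤ r := by linarith
  set m : ℝ := ‖⟪A₃ u, u⟫_ℂ‖ with hm
  set a : ℝ := (⟪A₁ u, u⟫_ℂ).re with hadef
  set b : ℝ := (⟪A₂ u, u⟫_ℂ).re with hbdef
  set n : ℝ := ‖A₁ u‖ * ‖A₂ u‖ with hn
  set K : ℝ := ‖⟪A₁ u, A₂ u⟫_ℂ‖ with hK
  set P₁ : ℝ := (⟪(A₁ ^ (2 * r)) u, u⟫_ℂ).re with hP₁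
  set P₂ : ℝ := (⟪(A₂ ^ (2 * r)) u, u⟫_ℂ).re with hP₂
  have hsq : ∀ x : ℝ, 0 ≤ x → x ^ (2*r) = (x^2) ^ r := by
    intro x hx
    rw [show (2:ℝ) = ((2:ℕ):ℝ) by norm_num, Real.rpow_mul hx, Real.rpow_natCast x 2]
  have h1 : m ^ 2 ≤ a * b := cs_step A₁ A₂ A₃ hblock u
  have hP1nn : 0 ≤ P₁ := aux_inner_nonneg CFC.rpow_nonneg u
  have hP2nn : 0 ≤ P₂ := aux_inner_nonneg CFC.rpow_nonneg u
  have hn0 : 0 ≤ n := by positivity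
  have hK0 : 0 ≤ K := norm_nonneg _
  have h2 : a * b ≤ (n + K) / 2 := by
    have hb := buzano (e := u) (x := A₁ u) (y := A₂ u) hu
    have e1 : ‖⟪u, A₁ u⟫_ℂ‖ = a := by
      rw [← inner_conj_symm u (A₁ u), RCLike.norm_conj, aux_inner_real hA₁ u, ← hadef]
      simp [abs_of_nonneg (aux_inner_nonneg hA₁ u)]
      exact aux_inner_nonneg hA₁ u
    have e2 : ‖⟪u, A₂ u⟫_ℂ‖ = b := by
      rw [← inner_conj_symm u (A₂ u), RCLike.norm_conj, aux_inner_real hA₂ u, ← hbdef]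
      simp [abs_of_nonneg (aux_inner_nonneg hA₂ u)]
      exact aux_inner_nonneg hA₂ u
    rw [e1, e2] at hb
    exact hb
  have hC : ((n + K)/2) ^ r ≤ (n^r + K^r)/2 := by
    have hcv := (convexOn_rpow hr).2 (Set.mem_Ici.mpr hn0) (Set.mem_Ici.mpr hK0)
      (by norm_num : (0:ℝ) ≤ 1/2) (by norm_num : (0:ℝ) ≤ 1/2) (by norm_num)
    simp only [smul_eq_mul] at hcv
    calc ((n + K)/2) ^ r = (1/2 * n + 1/2 * K) ^ r := by ring_nf
      _ ≤ 1/2 * n^r + 1/2 * K^r := hcv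
      _ = (n^r + K^r)/2 := by ring
  have hm1 : (‖A₁ u‖^2) ^ r ≤ P₁ := mccarthy A₁ hA₁ hr u hu
  have hm2 : (‖A₂ u‖^2) ^ r ≤ P₂ := mccarthy A₂ hA₂ hr u hu
  have hD : n ^ r ≤ (P₁ * P₂) ^ ((1:ℝ)/2) := by
    rw [← Real.sqrt_eq_rpow]
    rw [show n ^ r = Real.sqrt ((n^r)^2) by rw [Real.sqrt_sq (by positivity)]]
    apply Real.sqrt_le_sqrt
    have hsplit : (n^r)^2 = (‖A₁ u‖^2)^r * (‖A₂ u‖^2)^r := by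
      have : (n^r)^2 = (n^2)^r := by
        rw [← Real.rpow_natCast (n^r) 2, ← Real.rpow_mul hn0, mul_comm r ((2:ℕ):ℝ)]
        rw [show ((2:ℕ):ℝ) * r = 2 * r by norm_num, hsq n hn0]
      rw [this, hn, mul_pow, Real.mul_rpow (sq_nonneg _) (sq_nonneg _)]
    rw [hsplit]
    exact mul_le_mul hm1 hm2 (Real.rpow_nonneg (sq_nonneg _) r) hP1nn
  calc m ^ (2*r) = (m^2) ^ r := hsq m (norm_nonneg _)
    _ ≤ ((n + K)/2) ^ r := Real.rpow_le_rpow (sq_nonneg m) (h1.trans h2) hr0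
    _ ≤ (n^r + K^r)/2 := hC
    _ ≤ ((P₁ * P₂) ^ ((1:ℝ)/2) + K^r)/2 := by linarith
    _ = (1/2) * (P₁ * P₂) ^ ((1:ℝ)/2) + (1/2) * K^r := by ring
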